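/- Fix c ∈ ℝ and let H_c = { ε·[[a, b],[0, a^c]] : ε ∈ {±1}, a > 0, b ∈ ℝ } ≤ GL(2,ℝ). For h = ε·[[a, b],[0, a^c]] define A_H(h) = min( a/(1+|b|), 1/(1+sqrt(a²+b²)) ). Then hᵀ(1,0)ᵀ = ε·(a,b)ᵀ and A_H(h) equals the envelope function A_𝒪 of the orbit 𝒪 = {ξ ∈ ℝ² : ξ₁ ≠ 0} evaluated at hᵀ(1,0)ᵀ, and there exists C > 0 such that for all h ∈ H_c: ‖h‖·A_H(h)^{max(1,|c|)} ≤ C and ‖h⁻¹‖·A_H(h)^{1+|c|} ≤ C, where ‖·‖ is the operator norm. -/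

import Mathlib

/-!
Write `m = A_H(h)`. Since `a ≤ √(a² + b²)`, one has `m ≤ a`, `m ≤ a⁻¹`, `m |b| ≤ a` and
`m |b| ≤ 1`; the first two give `a ^ (±c) * m ^ |c| ≤ 1` (treat the signs of `c` separately).
The operator norm of a matrix is at most the sum of the absolute values of its entries, so
`‖h‖ ≤ a + |b| + a ^ c` and `‖h⁻¹‖ ≤ a⁻¹ + |b| a⁻¹ a ^ (-c) + a ^ (-c)`; multiplied by the
relevant power of `m ≤ 1`, each of the three terms is at most `1`, so `C = 3` works.
-/

open MeasureTheory Matrix Metric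

noncomputable section

variable {n : Type*} [Fintype n] [DecidableEq n]

/-- The dual action `ξ ↦ hᵀ ξ` of a matrix on Euclidean space. -/
def dualAct (h : Matrix n n ℝ) (ξ : EuclideanSpace ℝ n) : EuclideanSpace ℝ n :=
  (EuclideanSpace.equiv n ℝ).symm (h.transpose.mulVec (EuclideanSpace.equiv n ℝ ξ))

/-- The envelope function `A_S` of a set `S` (with respect to Euclidean norm and distance). -/
def env (S : Set (EuclideanSpace ℝ n)) (ξ : EuclideanSpace ℝ n) : ℝ :=
  min (infDist ξ S / (1 + Real.sqrt (‖ξ‖ ^ 2 - infDist ξ S ^ 2))) (1 / (1 + ‖ξ‖))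

/-- The Euclidean operator norm of a matrix. -/
def opNorm (m : Matrix n n ℝ) : ℝ :=
  ‖LinearMap.toContinuousLinearMap (Matrix.toEuclideanLin m)‖

end

open Real

section EuclideanSpace

variable {n : Type*} [Fintype n]

lemma EuclideanSpace.norm_le_sum_abs (y : EuclideanSpace ℝ n) : ‖y‖ ≤ ∑ i, |y i| := by
  classical
  calc ‖y‖ = ‖∑ i, EuclideanSpace.single i (y i)‖ := by
        congr 1; ext j; simp
    _ ≤ ∑ i, ‖EuclideanSpace.single i (y i)‖ := norm_sum_le _ _
    _ = ∑ i, |y i| := by simp [PiLp.norm_single]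

lemma infDist_setOf_apply_eq_zero (ξ : EuclideanSpace ℝ n) (i : n) :
    infDist ξ {x : EuclideanSpace ℝ n | x i = 0} = |ξ i| := by
  classical
  apply le_antisymm
  · have hmem : ξ - EuclideanSpace.single i (ξ i) ∈ {x : EuclideanSpace ℝ n | x i = 0} := by
      simp
    calc infDist ξ _ ≤ dist ξ (ξ - EuclideanSpace.single i (ξ i)) := infDist_le_dist_of_mem hmem
      _ = |ξ i| := by simp [PiLp.norm_single]
  · refine (le_infDist ⟨0, by simp⟩).2 fun y (hy : y i = 0) => ?_
    simpa [dist_eq_norm, hy] using PiLp.norm_apply_le (ξ - y) i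

variable [DecidableEq n]

lemma opNorm_le_sum_abs (M : Matrix n n ℝ) : opNorm M ≤ ∑ i, ∑ j, |M i j| := by
  refine ContinuousLinearMap.opNorm_le_bound _ (by positivity) fun x => ?_
  calc ‖toEuclideanLin M x‖ ≤ ∑ i, |toEuclideanLin M x i| := EuclideanSpace.norm_le_sum_abs _
    _ ≤ ∑ i, ∑ j, |M i j| * ‖x‖ := by
        gcongr with i
        simp only [toLpLin_apply, PiLp.toLp_apply, mulVec, dotProduct]
        refine (Finset.abs_sum_le_sum_abs _ _).trans (Finset.sum_le_sum fun j _ => ?_)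
        rw [abs_mul]
        exact mul_le_mul_of_nonneg_left (PiLp.norm_apply_le x j) (abs_nonneg _)
    _ = (∑ i, ∑ j, |M i j|) * ‖x‖ := by simp only [Finset.sum_mul]

lemma dualAct_single_apply (h : Matrix n n ℝ) (i j : n) :
    dualAct h (EuclideanSpace.single i 1) j = h i j := by
  simp [dualAct, mulVec, dotProduct]

end EuclideanSpace

lemma opNorm_upperTriangular_le (p q r : ℝ) : opNorm !![p, q; 0, r] ≤ |p| + |q| + |r| := by
  simpa [Fin.sum_univ_two, add_assoc] using opNorm_le_sum_abs !![p, q; 0, r]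

lemma inv_upperTriangular {p r : ℝ} (hp : p ≠ 0) (hr : r ≠ 0) (q : ℝ) :
    !![p, q; 0, r]⁻¹ = !![p⁻¹, -(q / (p * r)); 0, r⁻¹] := by
  refine inv_eq_right_inv ?_
  ext i j
  fin_cases i <;> fin_cases j <;> simp [mul_apply, Fin.sum_univ_two, hp, hr]
  field_simp
  ring

lemma smul_upperTriangular (ε p q r : ℝ) :
    ε • !![p, q; 0, r] = !![ε * p, ε * q; 0, ε * r] := by
  ext i j
  fin_cases i <;> fin_cases j <;> simp

lemma rpow_mul_rpow_abs_le_one {a m : ℝ} (ha : 0 < a) (hm : 0 < m) (hma : m ≤ a)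
    (hma' : m ≤ a⁻¹) (c : ℝ) : a ^ c * m ^ |c| ≤ 1 := by
  rcases le_or_gt 0 c with hc | hc
  · rw [abs_of_nonneg hc, ← mul_rpow ha.le hm.le]
    refine rpow_le_one (by positivity) ?_ hc
    calc a * m ≤ a * a⁻¹ := by gcongr
      _ = 1 := mul_inv_cancel₀ ha.ne'
  · rw [abs_of_neg hc, ← inv_inv a, inv_rpow (inv_pos.2 ha).le, ← rpow_neg (inv_pos.2 ha).le,
      ← mul_rpow (inv_pos.2 ha).le hm.le]
    refine rpow_le_one (by positivity) ?_ (by linarith)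
    calc a⁻¹ * m ≤ a⁻¹ * a := by gcongr
      _ = 1 := inv_mul_cancel₀ ha.ne'

/-- `A_H(h)` for `h = ε • !![a, b; 0, a ^ c]`. -/
noncomputable def shearletEnvelope (a b : ℝ) : ℝ :=
  min (a / (1 + |b|)) (1 / (1 + √(a ^ 2 + b ^ 2)))

section shearletEnvelope

variable {a b : ℝ}

lemma shearletEnvelope_pos (ha : 0 < a) : 0 < shearletEnvelope a b :=
  lt_min (by positivity) (by positivity)

lemma shearletEnvelope_le (ha : 0 < a) : shearletEnvelope a b ≤ a :=
  (min_le_left _ _).trans (div_le_self ha.le (by linarith [abs_nonneg b]))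

lemma shearletEnvelope_le_one : shearletEnvelope a b ≤ 1 :=
  (min_le_right _ _).trans <| (div_le_one (by positivity)).2 <| by
    linarith [sqrt_nonneg (a ^ 2 + b ^ 2)]

lemma shearletEnvelope_le_inv (ha : 0 < a) : shearletEnvelope a b ≤ a⁻¹ := by
  have : a ≤ √(a ^ 2 + b ^ 2) := le_sqrt_of_sq_le (by nlinarith)
  refine (min_le_right _ _).trans ?_
  rw [one_div]
  exact inv_anti₀ ha (by linarith)

lemma shearletEnvelope_mul_abs_le (ha : 0 < a) : shearletEnvelope a b * |b| ≤ a := by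
  have hm := (shearletEnvelope_pos ha (b := b)).le
  have : shearletEnvelope a b * (1 + |b|) ≤ a :=
    (le_div_iff₀ (by positivity)).1 (min_le_left _ _)
  nlinarith

lemma shearletEnvelope_mul_abs_le_one (ha : 0 < a) : shearletEnvelope a b * |b| ≤ 1 := by
  have hm := (shearletEnvelope_pos ha (b := b)).le
  have hb : |b| ≤ √(a ^ 2 + b ^ 2) := abs_le_sqrt (by nlinarith)
  have : shearletEnvelope a b * (1 + √(a ^ 2 + b ^ 2)) ≤ 1 :=
    (le_div_iff₀ (by positivity)).1 (min_le_right _ _)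
  nlinarith

end shearletEnvelope

section Bounds

variable {ε a : ℝ} (hε : |ε| = 1) (ha : 0 < a) (b c : ℝ)
include hε ha

lemma opNorm_shearlet_mul_shearletEnvelope_rpow_le :
    opNorm (ε • !![a, b; 0, a ^ c]) * shearletEnvelope a b ^ max 1 |c| ≤ 3 := by
  set m := shearletEnvelope a b
  have hm := shearletEnvelope_pos ha (b := b)
  have hm1 := shearletEnvelope_le_one (a := a) (b := b)
  have hk : m ^ max 1 |c| ≤ m := by
    simpa using rpow_le_rpow_of_exponent_ge hm hm1 (le_max_left 1 |c|)
  have hk' : m ^ max 1 |c| ≤ m ^ |c| := rpow_le_rpow_of_exponent_ge hm hm1 (le_max_right 1 |c|)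
  have hac : 0 < a ^ c := rpow_pos_of_pos ha c
  have hnorm : opNorm (ε • !![a, b; 0, a ^ c]) ≤ a + |b| + a ^ c := by
    simpa [smul_upperTriangular, abs_mul, hε, abs_of_pos ha, abs_of_pos hac]
      using opNorm_upperTriangular_le (ε * a) (ε * b) (ε * a ^ c)
  have h₁ : a * m ^ max 1 |c| ≤ 1 :=
    calc a * m ^ max 1 |c| ≤ a * a⁻¹ := by gcongr; exact hk.trans (shearletEnvelope_le_inv ha)
      _ = 1 := mul_inv_cancel₀ ha.ne'
  have h₂ : |b| * m ^ max 1 |c| ≤ 1 :=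
    calc |b| * m ^ max 1 |c| ≤ |b| * m := by gcongr
      _ ≤ 1 := by rw [mul_comm]; exact shearletEnvelope_mul_abs_le_one ha
  have h₃ : a ^ c * m ^ max 1 |c| ≤ 1 :=
    calc a ^ c * m ^ max 1 |c| ≤ a ^ c * m ^ |c| := by gcongr
      _ ≤ 1 := rpow_mul_rpow_abs_le_one ha hm (shearletEnvelope_le ha)
          (shearletEnvelope_le_inv ha) c
  calc opNorm (ε • !![a, b; 0, a ^ c]) * m ^ max 1 |c|
      ≤ (a + |b| + a ^ c) * m ^ max 1 |c| := by gcongr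
    _ ≤ 3 := by linarith

lemma opNorm_shearlet_inv_mul_shearletEnvelope_rpow_le :
    opNorm (ε • !![a, b; 0, a ^ c])⁻¹ * shearletEnvelope a b ^ (1 + |c|) ≤ 3 := by
  set m := shearletEnvelope a b
  have hm := shearletEnvelope_pos ha (b := b)
  have hε0 : ε ≠ 0 := by rintro rfl; simp at hε
  have hac : 0 < a ^ c := rpow_pos_of_pos ha c
  have hnorm : opNorm (ε • !![a, b; 0, a ^ c])⁻¹ ≤ a⁻¹ + |b| / a * a ^ (-c) + a ^ (-c) := by
    rw [smul_upperTriangular, inv_upperTriangular (by positivity) (by positivity)]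
    convert opNorm_upperTriangular_le (ε * a)⁻¹ (-(ε * b / (ε * a * (ε * a ^ c)))) (ε * a ^ c)⁻¹
      using 2 <;>
      simp [abs_mul, abs_div, abs_inv, hε, abs_of_pos ha, abs_of_pos hac, rpow_neg ha.le]
    field_simp
  have hm_pow : m ^ |c| ≤ 1 := rpow_le_one hm.le shearletEnvelope_le_one (abs_nonneg c)
  have hkey : a ^ (-c) * m ^ |c| ≤ 1 := by
    simpa using rpow_mul_rpow_abs_le_one ha hm (shearletEnvelope_le ha)
      (shearletEnvelope_le_inv ha) (-c)
  have hma : m / a ≤ 1 := (div_le_one ha).2 (shearletEnvelope_le ha)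
  have hmb : m * |b| / a ≤ 1 := (div_le_one ha).2 (shearletEnvelope_mul_abs_le ha)
  have hm1 := shearletEnvelope_le_one (a := a) (b := b)
  calc opNorm (ε • !![a, b; 0, a ^ c])⁻¹ * m ^ (1 + |c|)
      ≤ (a⁻¹ + |b| / a * a ^ (-c) + a ^ (-c)) * (m * m ^ |c|) := by
        rw [rpow_add hm, rpow_one]; gcongr
    _ = m / a * m ^ |c| + m * |b| / a * (a ^ (-c) * m ^ |c|) + m * (a ^ (-c) * m ^ |c|) := by
        ring
    _ ≤ 1 * 1 + 1 * 1 + 1 * 1 := by gcongr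
    _ = 3 := by norm_num

end Bounds

lemma env_compl_setOf_ne_zero (ξ : EuclideanSpace ℝ (Fin 2)) :
    env {ξ : EuclideanSpace ℝ (Fin 2) | EuclideanSpace.equiv (Fin 2) ℝ ξ 0 ≠ 0}ᶜ ξ =
      min (|ξ 0| / (1 + |ξ 1|)) (1 / (1 + ‖ξ‖)) := by
  have hS : {ξ : EuclideanSpace ℝ (Fin 2) | EuclideanSpace.equiv (Fin 2) ℝ ξ 0 ≠ 0}ᶜ =
      {x : EuclideanSpace ℝ (Fin 2) | x 0 = 0} := by
    ext; simp
  rw [env, hS, infDist_setOf_apply_eq_zero, EuclideanSpace.norm_sq_eq, Fin.sum_univ_two]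
  simp [sq_abs, sqrt_sq_eq_abs]

lemma dualAct_shearlet_single (ε a b c : ℝ) :
    dualAct (ε • !![a, b; 0, a ^ c]) (EuclideanSpace.single 0 1) =
      (EuclideanSpace.equiv (Fin 2) ℝ).symm (ε • ![a, b]) := by
  ext j
  fin_cases j <;> simp [dualAct_single_apply]

/-- For the two-dimensional shearlet-type group `H_c` with elements
`h = ε·[[a,b],[0,a^c]]`: `hᵀ(1,0)ᵀ = ε·(a,b)ᵀ`, the quantity
`A_H(h) = min(a/(1+|b|), 1/(1+√(a²+b²)))` is the envelope function of the orbit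
`𝒪 = {ξ : ξ₁ ≠ 0}` at `hᵀ(1,0)ᵀ`, and `‖h‖·A_H(h)^{max(1,|c|)} ≤ C` and
`‖h⁻¹‖·A_H(h)^{1+|c|} ≤ C` for a constant `C > 0`. -/
theorem stmt19 (c : ℝ) :
    (∀ ε a b : ℝ, (ε = 1 ∨ ε = -1) → 0 < a →
      dualAct (ε • !![a, b; 0, a ^ c]) (EuclideanSpace.single (0 : Fin 2) (1 : ℝ)) =
          (EuclideanSpace.equiv (Fin 2) ℝ).symm (ε • ![a, b]) ∧
        min (a / (1 + |b|)) (1 / (1 + Real.sqrt (a ^ 2 + b ^ 2))) =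
          env {ξ : EuclideanSpace ℝ (Fin 2) | EuclideanSpace.equiv (Fin 2) ℝ ξ 0 ≠ 0}ᶜ
            (dualAct (ε • !![a, b; 0, a ^ c]) (EuclideanSpace.single (0 : Fin 2) (1 : ℝ)))) ∧
      ∃ C : ℝ, 0 < C ∧ ∀ ε a b : ℝ, (ε = 1 ∨ ε = -1) → 0 < a →
        opNorm (ε • !![a, b; 0, a ^ c]) *
            min (a / (1 + |b|)) (1 / (1 + Real.sqrt (a ^ 2 + b ^ 2))) ^ max 1 |c| ≤ C ∧
          opNorm (ε • !![a, b; 0, a ^ c])⁻¹ *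
            min (a / (1 + |b|)) (1 / (1 + Real.sqrt (a ^ 2 + b ^ 2))) ^ (1 + |c|) ≤ C := by
  refine ⟨fun ε a b hε ha => ?_, 3, by norm_num, fun ε a b hε ha => ?_⟩
  all_goals have hε' : |ε| = 1 := (abs_eq zero_le_one).2 hε
  · refine ⟨dualAct_shearlet_single ε a b c, ?_⟩
    rw [dualAct_shearlet_single, env_compl_setOf_ne_zero, EuclideanSpace.norm_eq]
    have hε2 : ε ^ 2 = 1 := by rw [← sq_abs, hε', one_pow]
    simp [abs_mul, hε', abs_of_pos ha, Fin.sum_univ_two, mul_pow, hε2]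
  · exact ⟨opNorm_shearlet_mul_shearletEnvelope_rpow_le hε' ha b c,
      opNorm_shearlet_inv_mul_shearletEnvelope_rpow_le hε' ha b c⟩
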